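/- arXiv:2205.11553 — 6 statements merged into one kernel-verified Lean document; each statement's English description precedes it below -/
import Mathlib

section
/- Let δ > 0 and let χ : ℝ → ℝ be a smooth, nondecreasing, nonnegative function with χ(y) = y for y ≥ 1 and χ(y) = 0 for y ≤ 0. Define χ_δ(y) = δ·χ(y/δ) and Q_δ(y) = ∫₀^y χ_δ(s) ds. Then for all a, b ∈ ℝ, (Q_δ(a) − Q_δ(b))·(χ_δ(a) − χ_δ(b)) ≥ (1/2)|χ_δ(a) − χ_δ(b)|³ − δ²·|χ_δ(a) − χ_δ(b)|. -/
/-- Pointwise inequality underlying the lower bound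
`∫ (Q_δ(c̃₁) − Q_δ(c̃₂)) ρ̃ dV ≥ (1/4)‖ρ̃‖_{L³}³ − C`:
for the smooth cutoff `χ_δ(y) = δ·χ(y/δ)` and its primitive `Q_δ`,
`(Q_δ(a) − Q_δ(b))(χ_δ(a) − χ_δ(b)) ≥ (1/2)|χ_δ(a) − χ_δ(b)|³ − δ²|χ_δ(a) − χ_δ(b)|`. -/
theorem cutoff_primitive_entropy_lower_bound
    (δ : ℝ) (hδ : 0 < δ) (χ : ℝ → ℝ)
    (hχ : ContDiff ℝ (⊤ : ℕ∞) χ) (hmono : Monotone χ) (hnonneg : ∀ y, 0 ≤ χ y)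
    (hone : ∀ y : ℝ, 1 ≤ y → χ y = y) (hzero : ∀ y : ℝ, y ≤ 0 → χ y = 0) :
    ∀ a b : ℝ,
      ((∫ s in (0:ℝ)..a, δ * χ (s / δ)) - (∫ s in (0:ℝ)..b, δ * χ (s / δ))) *
          (δ * χ (a / δ) - δ * χ (b / δ)) ≥
        (1 / 2) * |δ * χ (a / δ) - δ * χ (b / δ)| ^ 3 -
          δ ^ 2 * |δ * χ (a / δ) - δ * χ (b / δ)| := by
  intro a b
  wlog hab : b ≤ a with H
  · have h2 := H δ hδ χ hχ hmono hnonneg hone hzero b a (le_of_not_ge hab)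
    have e1 : ((∫ s in (0:ℝ)..a, δ * χ (s / δ)) - ∫ s in (0:ℝ)..b, δ * χ (s / δ)) *
        (δ * χ (a / δ) - δ * χ (b / δ)) =
        ((∫ s in (0:ℝ)..b, δ * χ (s / δ)) - ∫ s in (0:ℝ)..a, δ * χ (s / δ)) *
        (δ * χ (b / δ) - δ * χ (a / δ)) := by ring
    rw [e1, abs_sub_comm (δ * χ (a / δ)) (δ * χ (b / δ))]
    exact h2
  set f : ℝ → ℝ := fun s => δ * χ (s / δ) with hfdef
  have hfc : Continuous f :=
    continuous_const.mul (hχ.continuous.comp (continuous_id.div_const δ))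
  have hfint : ∀ x y : ℝ, IntervalIntegrable f MeasureTheory.volume x y :=
    fun x y => hfc.intervalIntegrable x y
  have hfmono : Monotone f := by
    intro x y hxy
    have : x / δ ≤ y / δ := by gcongr
    exact mul_le_mul_of_nonneg_left (hmono this) hδ.le
  have hfnonneg : ∀ s : ℝ, 0 ≤ f s := fun s => mul_nonneg hδ.le (hnonneg _)
  have hfid : ∀ s : ℝ, δ ≤ s → f s = s := by
    intro s hs
    have h1 : (1 : ℝ) ≤ s / δ := (one_le_div hδ).mpr hs
    simp only [hfdef]
    rw [hone _ h1, mul_div_cancel₀ _ hδ.ne']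
  have hfδ : f δ = δ := hfid δ le_rfl
  -- the difference of primitives is the integral over [b, a]
  have hsplit : (∫ s in (0:ℝ)..a, f s) - (∫ s in (0:ℝ)..b, f s) = ∫ s in b..a, f s := by
    rw [← intervalIntegral.integral_add_adjacent_intervals (hfint 0 b) (hfint b a)]
    ring
  -- key lower bound on the integral
  have hkey : (max (f a) δ) ^ 2 - (max (f b) δ) ^ 2 ≤ 2 * ∫ s in b..a, f s := by
    rcases lt_or_ge a δ with haδ | haδ
    · -- a < δ : both maxes equal δ
      have hua : f a ≤ δ := hfδ ▸ hfmono haδ.le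
      have hub : f b ≤ δ := hfδ ▸ hfmono (hab.trans haδ.le)
      have hI : 0 ≤ ∫ s in b..a, f s :=
        intervalIntegral.integral_nonneg hab (fun s _ => hfnonneg s)
      rw [max_eq_right hua, max_eq_right hub]
      linarith
    · -- δ ≤ a
      have hfa : f a = a := hfid a haδ
      have hmaxa : max (f a) δ = a := by rw [hfa]; exact max_eq_left haδ
      rcases lt_or_ge b δ with hbδ | hbδ
      · -- b < δ
        have hub : f b ≤ δ := hfδ ▸ hfmono hbδ.le
        have hmaxb : max (f b) δ = δ := max_eq_right hub
        have hsplit2 : (∫ s in b..a, f s) = (∫ s in b..δ, f s) + ∫ s in δ..a, f s :=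
          (intervalIntegral.integral_add_adjacent_intervals (hfint b δ) (hfint δ a)).symm
        have h1 : 0 ≤ ∫ s in b..δ, f s :=
          intervalIntegral.integral_nonneg hbδ.le (fun s _ => hfnonneg s)
        have h2 : (∫ s in δ..a, f s) = (a ^ 2 - δ ^ 2) / 2 := by
          have hcongr : (∫ s in δ..a, f s) = ∫ s in δ..a, s := by
            apply intervalIntegral.integral_congr
            intro s hs
            rw [Set.uIcc_of_le haδ] at hs
            exact hfid s hs.1
          rw [hcongr, integral_id]
        rw [hmaxa, hmaxb, hsplit2, h2]
        linarith
      · -- δ ≤ b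
        have hfb : f b = b := hfid b hbδ
        have hmaxb : max (f b) δ = b := by rw [hfb]; exact max_eq_left hbδ
        have h2 : (∫ s in b..a, f s) = (a ^ 2 - b ^ 2) / 2 := by
          have hcongr : (∫ s in b..a, f s) = ∫ s in b..a, s := by
            apply intervalIntegral.integral_congr
            intro s hs
            rw [Set.uIcc_of_le hab] at hs
            exact hfid s (hbδ.trans hs.1)
          rw [hcongr, integral_id]
        rw [hmaxa, hmaxb, h2]
        linarith
  have hvu : f b ≤ f a := hfmono hab
  have habs : |δ * χ (a / δ) - δ * χ (b / δ)| = f a - f b := by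
    simp only [hfdef]
    exact abs_of_nonneg (sub_nonneg.mpr hvu)
  have hv0 : 0 ≤ f b := hfnonneg b
  have hu2 : (f a) ^ 2 ≤ (max (f a) δ) ^ 2 := by
    have h1 : f a ≤ max (f a) δ := le_max_left _ _
    have h2 : 0 ≤ f a := hfnonneg a
    nlinarith
  have hv2 : (max (f b) δ) ^ 2 ≤ (f b) ^ 2 + δ ^ 2 := by
    rcases le_total (f b) δ with h | h
    · rw [max_eq_right h]; nlinarith
    · rw [max_eq_left h]; nlinarith
  have efab : δ * χ (a / δ) - δ * χ (b / δ) = f a - f b := rfl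
  show _ ≥ _
  rw [habs, efab, hsplit]
  set I := ∫ s in b..a, f s with hI
  have hkey2 : (f a) ^ 2 - (f b) ^ 2 - δ ^ 2 ≤ 2 * I := by linarith
  nlinarith [mul_le_mul_of_nonneg_right hkey2 (sub_nonneg.mpr hvu),
    mul_nonneg (mul_nonneg (sub_nonneg.mpr hvu) (sub_nonneg.mpr hvu)) hv0]
end

section
/- Let Ω ⊆ ℝ³ be open and connected, and let c₁, c₂, Φ, p : Ω → ℝ and u : Ω → ℝ³ be smooth functions satisfying on Ω the steady Nernst–Planck–Navier–Stokes system: u·∇c₁ = div(∇c₁ + c₁∇Φ), u·∇c₂ = div(∇c₂ − c₂∇Φ), −ΔΦ = ρ where ρ = c₁ − c₂, (u·∇)u − Δu + ∇p = −ρ∇Φ, and div u = 0. If there exists x₀ ∈ Ω with ∇ρ(x₀) × ∇Φ(x₀) ≠ 0, then u is not identically zero on Ω. -/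
/-- Partial derivative in the `i`-th coordinate direction. -/
noncomputable def pd (i : Fin 3) (f : (Fin 3 → ℝ) → ℝ) (x : Fin 3 → ℝ) : ℝ :=
  fderiv ℝ f x (Pi.single i 1)

/-- Gradient of a scalar function on `ℝ³`. -/
noncomputable def grad (f : (Fin 3 → ℝ) → ℝ) (x : Fin 3 → ℝ) : Fin 3 → ℝ :=
  fun i => pd i f x

/-- Laplacian of a scalar function on `ℝ³`. -/
noncomputable def lap (f : (Fin 3 → ℝ) → ℝ) (x : Fin 3 → ℝ) : ℝ :=
  ∑ i, pd i (fun y => pd i f y) x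

lemma pd_smooth {f : (Fin 3 → ℝ) → ℝ} (hf : ContDiff ℝ (⊤ : ℕ∞) f) (i : Fin 3) :
    ContDiff ℝ (⊤ : ℕ∞) (pd i f) := by
  unfold pd
  exact (ContinuousLinearMap.apply ℝ ℝ (Pi.single i 1)).contDiff.comp
    (hf.fderiv_right (m := (⊤ : ℕ∞)) le_rfl)

lemma pd_symm {f : (Fin 3 → ℝ) → ℝ} (hf : ContDiff ℝ (⊤ : ℕ∞) f) (i j : Fin 3) (x : Fin 3 → ℝ) :
    pd i (pd j f) x = pd j (pd i f) x := by
  have hf1 : ∀ y, HasFDerivAt f (fderiv ℝ f y) y :=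
    fun y => (hf.differentiable (by simp) y).hasFDerivAt
  have hfd : ContDiff ℝ (⊤ : ℕ∞) (fderiv ℝ f) := hf.fderiv_right (m := (⊤ : ℕ∞)) le_rfl
  have hf2 : HasFDerivAt (fderiv ℝ f) (fderiv ℝ (fderiv ℝ f) x) x :=
    (hfd.differentiable (by simp) x).hasFDerivAt
  have hsymm := second_derivative_symmetric hf1 hf2
  have key : ∀ v w : Fin 3 → ℝ,
      fderiv ℝ (fun y => fderiv ℝ f y v) x w = fderiv ℝ (fderiv ℝ f) x w v := by
    intro v w
    have h := hf2.clm_apply (hasFDerivAt_const v x)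
    rw [h.fderiv]
    simp
  show fderiv ℝ (fun y => fderiv ℝ f y (Pi.single j 1)) x (Pi.single i 1) = _
  rw [key]
  rw [hsymm]
  rw [← key]
  rfl

lemma pd_congr {f g : (Fin 3 → ℝ) → ℝ} {x : Fin 3 → ℝ} (h : f =ᶠ[nhds x] g) (i : Fin 3) :
    pd i f x = pd i g x := by
  unfold pd; rw [h.fderiv_eq]

lemma pd_mul {f g : (Fin 3 → ℝ) → ℝ} {x : Fin 3 → ℝ} (hf : DifferentiableAt ℝ f x)
    (hg : DifferentiableAt ℝ g x) (i : Fin 3) :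
    pd i (fun y => f y * g y) x = pd i f x * g x + f x * pd i g x := by
  unfold pd
  rw [fderiv_fun_mul hf hg]
  simp
  ring

lemma pd_neg {f : (Fin 3 → ℝ) → ℝ} {x : Fin 3 → ℝ} (i : Fin 3) :
    pd i (fun y => -(f y)) x = -(pd i f x) := by
  unfold pd; rw [fderiv_fun_neg]; simp

/-- **Interior form of Theorem 2.7.** For a smooth solution of the steady
Nernst–Planck–Navier–Stokes system on an open connected `Ω ⊆ ℝ³`, if
`∇ρ × ∇Φ ≠ 0` at some point of `Ω`, then the velocity `u` is not identically
zero on `Ω`. -/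
theorem steady_NPNS_nonzero_flow
    (Ω : Set (Fin 3 → ℝ)) (hΩo : IsOpen Ω) (hΩc : IsConnected Ω)
    (c₁ c₂ Φ p : (Fin 3 → ℝ) → ℝ) (u : (Fin 3 → ℝ) → Fin 3 → ℝ)
    (hc₁ : ContDiff ℝ (⊤ : ℕ∞) c₁) (hc₂ : ContDiff ℝ (⊤ : ℕ∞) c₂) (hΦ : ContDiff ℝ (⊤ : ℕ∞) Φ)
    (hp : ContDiff ℝ (⊤ : ℕ∞) p) (hu : ContDiff ℝ (⊤ : ℕ∞) u)
    -- u·∇c₁ = div(∇c₁ + c₁∇Φ)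
    (heq₁ : ∀ x ∈ Ω, ∑ i, u x i * pd i c₁ x =
      ∑ i, pd i (fun y => pd i c₁ y + c₁ y * pd i Φ y) x)
    -- u·∇c₂ = div(∇c₂ − c₂∇Φ)
    (heq₂ : ∀ x ∈ Ω, ∑ i, u x i * pd i c₂ x =
      ∑ i, pd i (fun y => pd i c₂ y - c₂ y * pd i Φ y) x)
    -- −ΔΦ = ρ = c₁ − c₂
    (hpois : ∀ x ∈ Ω, -lap Φ x = c₁ x - c₂ x)
    -- (u·∇)u − Δu + ∇p = −ρ∇Φ, componentwise
    (hnse : ∀ x ∈ Ω, ∀ k : Fin 3,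
      (∑ j, u x j * pd j (fun y => u y k) x) - lap (fun y => u y k) x + pd k p x =
        -((c₁ x - c₂ x) * pd k Φ x))
    -- div u = 0
    (hdiv : ∀ x ∈ Ω, ∑ i, pd i (fun y => u y i) x = 0)
    -- ∇ρ × ∇Φ ≠ 0 somewhere
    (hx₀ : ∃ x₀ ∈ Ω, crossProduct (grad (fun y => c₁ y - c₂ y) x₀) (grad Φ x₀) ≠ 0) :
    ¬(∀ x ∈ Ω, u x = 0) := by
  intro H
  obtain ⟨x₀, hx₀Ω, hcross⟩ := hx₀
  apply hcross
  have hzero : ∀ (f : (Fin 3 → ℝ) → ℝ), (∀ y ∈ Ω, f y = 0) →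
      ∀ i : Fin 3, ∀ x ∈ Ω, pd i f x = 0 := by
    intro f hf i x hx
    have hev : f =ᶠ[nhds x] (fun _ => (0 : ℝ)) := by
      filter_upwards [hΩo.mem_nhds hx] with y hy using hf y hy
    rw [pd_congr hev i]
    unfold pd
    simp
  have hpgrad : ∀ k : Fin 3, ∀ x ∈ Ω, pd k p x = -((c₁ x - c₂ x) * pd k Φ x) := by
    intro k x hx
    have h1 : (∑ j, u x j * pd j (fun y => u y k) x) = 0 := by
      apply Finset.sum_eq_zero; intro j _
      have hj : u x j = 0 := by simp [H x hx]
      simp [hj]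
    have h2 : lap (fun y => u y k) x = 0 := by
      unfold lap
      apply Finset.sum_eq_zero; intro i _
      exact hzero _ (fun y hy =>
        hzero (fun z => u z k) (fun z hz => by simp [H z hz]) i y hy) i x hx
    have h3 := hnse x hx k
    rw [h1, h2] at h3
    linarith
  have hρ : ContDiff ℝ (⊤ : ℕ∞) (fun y => c₁ y - c₂ y) := hc₁.sub hc₂
  have key : ∀ i j : Fin 3, pd i (fun y => c₁ y - c₂ y) x₀ * pd j Φ x₀
      = pd j (fun y => c₁ y - c₂ y) x₀ * pd i Φ x₀ := by
    intro i j
    have hexp : ∀ a b : Fin 3,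
        pd a (pd b p) x₀ = -(pd a (fun y => c₁ y - c₂ y) x₀ * pd b Φ x₀
          + (c₁ x₀ - c₂ x₀) * pd a (pd b Φ) x₀) := by
      intro a b
      have heq : (pd b p) =ᶠ[nhds x₀]
          (fun y => -((fun z => c₁ z - c₂ z) y * pd b Φ y)) := by
        filter_upwards [hΩo.mem_nhds hx₀Ω] with y hy using hpgrad b y hy
      rw [pd_congr heq a, pd_neg a,
        pd_mul (hρ.differentiable (by simp) x₀)
          ((pd_smooth hΦ b).differentiable (by simp) x₀) a]
    have h1 := hexp i j
    have h2 := hexp j i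
    have hsp := pd_symm hp i j x₀
    have hsΦ := pd_symm hΦ i j x₀
    rw [h1, h2, hsΦ] at hsp
    linarith
  rw [cross_apply]
  have k01 := key 0 1
  have k02 := key 0 2
  have k12 := key 1 2
  funext k
  fin_cases k <;> simp [grad] <;> linarith
end

section
/- Let Ω ⊂ ℝ³ be a bounded, open, connected set, d₁, d₂ > 0 constants, b₁, b₂ : ℝ × ℝ³ → ℝ³ smooth vector fields, and p₁, p₂ : ℝ × ℝ³ → ℝ smooth functions with p₁, p₂ ≥ 0 on [0,∞) × closure(Ω). Let v₁, v₂ : ℝ × ℝ³ → ℝ be smooth, nonnegative on [0,∞) × closure(Ω), satisfying on [0,∞) × Ω the system ∂ₜv₁ = d₁Δv₁ + b₁·∇v₁ − p₁(v₁ − v₂) and ∂ₜv₂ = d₂Δv₂ + b₂·∇v₂ + p₂(v₁ − v₂), and satisfying time-independent boundary conditions vᵢ(t,x) = gᵢ(x) for all t ≥ 0 and x ∈ ∂Ω, where gᵢ : ∂Ω → ℝ is continuous with gᵢ > 0. Set g̲ = min over i of inf_{∂Ω} gᵢ and ḡ = max over i of sup_{∂Ω} gᵢ. Then for i = 1,2,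 all t ≥ 0, and all x ∈ closure(Ω): min{inf_Ω v₁(0,·), inf_Ω v₂(0,·), g̲} ≤ vᵢ(t,x) ≤ max{sup_Ω v₁(0,·), sup_Ω v₂(0,·), ḡ}. Moreover, the functions V̄(t) = max over i of sup_{x∈Ω} vᵢ(t,x) and V̲(t) = min over i of inf_{x∈Ω} vᵢ(t,x) are, respectively, nonincreasing and nondecreasing on (0,∞). -/
open Set Filter

section Auxiliary

lemma aux_deriv_nonneg_right_max {f : ℝ → ℝ} {f' a t₀ : ℝ} (h : HasDerivAt f f' a)
    (ht : t₀ < a) (hm : ∀ s ∈ Set.Icc t₀ a, f s ≤ f a) : 0 ≤ f' := by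
  have hs := hasDerivAt_iff_tendsto_slope.mp h
  have hs' : Tendsto (slope f a) (nhdsWithin a (Iio a)) (nhds f') :=
    hs.mono_left (nhdsWithin_mono a (fun y hy => ne_of_lt hy))
  refine ge_of_tendsto hs' ?_
  filter_upwards [Ioo_mem_nhdsLT_of_mem (⟨ht, le_refl a⟩ : a ∈ Ioc t₀ a)] with s hsm
  rw [slope_def_field]
  exact div_nonneg_of_nonpos (sub_nonpos.mpr (hm s ⟨hsm.1.le, hsm.2.le⟩))
    (sub_neg.mpr hsm.2).le

lemma aux_secondDeriv_nonpos_of_isLocalMax {f : ℝ → ℝ} (hf : ContDiff ℝ (⊤ : ℕ∞) f) {a : ℝ}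
    (h : IsLocalMax f a) : deriv (deriv f) a ≤ 0 := by
  by_contra hpos
  push_neg at hpos
  have hf' : ContDiff ℝ (⊤ : ℕ∞) f := hf.of_le (by simp)
  have hd1 : ContDiff ℝ (⊤ : ℕ∞) (deriv f) := (contDiff_infty_iff_deriv.mp hf').2
  have hd2c : Continuous (deriv (deriv f)) :=
    ((contDiff_infty_iff_deriv.mp hd1).2).continuous
  have hev : ∀ᶠ s in nhds a, deriv (deriv f) s ∈ Ioi 0 :=
    hd2c.continuousAt.eventually_mem (isOpen_Ioi.mem_nhds hpos)
  obtain ⟨δ, hδ, hball⟩ := Metric.eventually_nhds_iff_ball.mp (hev.and h)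
  set b := a + δ/2 with hb
  have hab : a < b := by simp [hb]; linarith
  have hsub : Icc a b ⊆ Metric.ball a δ := by
    intro y hy
    rw [Metric.mem_ball, Real.dist_eq, abs_lt]
    constructor <;> simp only [hb] at hy ⊢ <;> [linarith [hy.1]; linarith [hy.2]]
  have hmono : StrictMonoOn (deriv f) (Icc a b) := by
    refine strictMonoOn_of_deriv_pos (convex_Icc a b) (hd1.continuous.continuousOn) ?_
    intro x hx
    rw [interior_Icc] at hx
    exact (hball x (hsub ⟨hx.1.le, hx.2.le⟩)).1
  have hda : deriv f a = 0 := h.deriv_eq_zero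
  have hfmono : StrictMonoOn f (Icc a b) := by
    refine strictMonoOn_of_deriv_pos (convex_Icc a b) (hf'.continuous.continuousOn) ?_
    intro x hx
    rw [interior_Icc] at hx
    have := hmono (left_mem_Icc.mpr hab.le) ⟨hx.1.le, hx.2.le⟩ hx.1
    rwa [hda] at this
  have h1 : f a < f b := hfmono (left_mem_Icc.mpr hab.le) (right_mem_Icc.mpr hab.le) hab
  have h2 : f b ≤ f a := (hball b (hsub (right_mem_Icc.mpr hab.le))).2
  linarith

lemma aux_pd_contDiff {f : (Fin 3 → ℝ) → ℝ} (hf : ContDiff ℝ (⊤ : ℕ∞) f) (i : Fin 3) :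
    ContDiff ℝ (⊤ : ℕ∞) (fun y => pd i f y) :=
  (hf.fderiv_right (by simp)).clm_apply contDiff_const

lemma aux_pd2_nonpos {f : (Fin 3 → ℝ) → ℝ} (hf : ContDiff ℝ (⊤ : ℕ∞) f) {Ω : Set (Fin 3 → ℝ)}
    (hΩ : IsOpen Ω) {x : Fin 3 → ℝ} (hx : x ∈ Ω) (hmax : ∀ y ∈ Ω, f y ≤ f x)
    (i : Fin 3) : pd i (fun y => pd i f y) x ≤ 0 := by
  set v : Fin 3 → ℝ := Pi.single i 1 with hv
  set L : ℝ → (Fin 3 → ℝ) := fun s => x + s • v with hLdef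
  have hL0 : L 0 = x := by simp [hLdef]
  have hL : ContDiff ℝ (⊤ : ℕ∞) L := contDiff_const.add (contDiff_id.smul contDiff_const)
  have hL' : ∀ s, HasDerivAt L v s := by
    intro s
    simpa [hLdef] using ((hasDerivAt_id s).smul_const v).const_add x
  have hgd : ∀ s, HasDerivAt (f ∘ L) (pd i f (L s)) s := fun s =>
    ((hf.differentiable (by simp) (L s)).hasFDerivAt).comp_hasDerivAt s (hL' s)
  have hderiv : deriv (f ∘ L) = fun s => pd i f (L s) := funext fun s => (hgd s).deriv
  have hpdf : ContDiff ℝ (⊤ : ℕ∞) (fun y => pd i f y) := aux_pd_contDiff hf i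
  have hgd2 : HasDerivAt (fun s => pd i f (L s)) (pd i (fun y => pd i f y) x) 0 := by
    have := ((hpdf.differentiable (by simp) (L 0)).hasFDerivAt).comp_hasDerivAt 0 (hL' 0)
    rwa [hL0] at this
  have hdd : deriv (deriv (f ∘ L)) 0 = pd i (fun y => pd i f y) x := by
    rw [hderiv]; exact hgd2.deriv
  have hlm : IsLocalMax (f ∘ L) 0 := by
    have hnb : L ⁻¹' Ω ∈ nhds (0:ℝ) :=
      (hΩ.preimage hL.continuous).mem_nhds (by rw [mem_preimage, hL0]; exact hx)
    filter_upwards [hnb] with s hs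
    calc f (L s) ≤ f x := hmax _ hs
    _ = (f ∘ L) 0 := by rw [Function.comp_apply, hL0]
  have := aux_secondDeriv_nonpos_of_isLocalMax (hf.comp hL) hlm
  rwa [hdd] at this

lemma aux_pd_eq_zero {f : (Fin 3 → ℝ) → ℝ} {Ω : Set (Fin 3 → ℝ)}
    (hΩ : IsOpen Ω) {x : Fin 3 → ℝ} (hx : x ∈ Ω) (hmax : ∀ y ∈ Ω, f y ≤ f x)
    (i : Fin 3) : pd i f x = 0 := by
  have hlm : IsLocalMax f x := by
    filter_upwards [hΩ.mem_nhds hx] with y hy using hmax y hy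
  rw [pd, hlm.fderiv_eq_zero]
  simp

lemma aux_pd_neg (i : Fin 3) (f : (Fin 3 → ℝ) → ℝ) (x : Fin 3 → ℝ) :
    pd i (fun y => -f y) x = -pd i f x := by simp [pd, fderiv_neg]

lemma aux_lap_neg (f : (Fin 3 → ℝ) → ℝ) (x : Fin 3 → ℝ) :
    lap (fun y => -f y) x = -lap f x := by
  simp only [lap, ← Finset.sum_neg_distrib]
  refine Finset.sum_congr rfl fun i _ => ?_
  have h1 : (fun y => pd i (fun z => -f z) y) = fun y => -(pd i f y) :=
    funext fun y => aux_pd_neg i f y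
  rw [h1, aux_pd_neg]

lemma aux_le_sSup_closure {f : (Fin 3 → ℝ) → ℝ} (hf : Continuous f)
    {Ω : Set (Fin 3 → ℝ)} (hΩb : Bornology.IsBounded Ω) {x : Fin 3 → ℝ}
    (hx : x ∈ closure Ω) : f x ≤ sSup (f '' Ω) := by
  have hbdd : BddAbove (f '' Ω) :=
    ((hΩb.isCompact_closure.image hf).bddAbove).mono (image_mono (f := f) subset_closure)
  have h1 : f x ∈ closure (f '' Ω) := image_closure_subset_closure_image hf ⟨x, hx, rfl⟩
  exact closure_minimal (fun r hr => le_csSup hbdd hr) isClosed_Iic h1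

lemma aux_sInf_le_closure {f : (Fin 3 → ℝ) → ℝ} (hf : Continuous f)
    {Ω : Set (Fin 3 → ℝ)} (hΩb : Bornology.IsBounded Ω) {x : Fin 3 → ℝ}
    (hx : x ∈ closure Ω) : sInf (f '' Ω) ≤ f x := by
  have hbdd : BddBelow (f '' Ω) :=
    ((hΩb.isCompact_closure.image hf).bddBelow).mono (image_mono (f := f) subset_closure)
  have h1 : f x ∈ closure (f '' Ω) := image_closure_subset_closure_image hf ⟨x, hx, rfl⟩
  exact closure_minimal (fun r hr => csInf_le hbdd hr) isClosed_Ici h1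

lemma aux_core_contra {Ω : Set (Fin 3 → ℝ)} (hΩo : IsOpen Ω) {u : ℝ × (Fin 3 → ℝ) → ℝ}
    (hu : ContDiff ℝ (⊤ : ℕ∞) u) {t₀ tb : ℝ} (ht : t₀ < tb) {xb : Fin 3 → ℝ} (hx : xb ∈ Ω)
    {ε : ℝ} (hε : 0 < ε) {d : ℝ} (hd : 0 < d) (B : Fin 3 → ℝ) {c : ℝ} (hc : c ≤ 0)
    (hmt : ∀ s ∈ Icc t₀ tb, u (s,xb) - ε*(s - t₀) ≤ u (tb,xb) - ε*(tb - t₀))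
    (hmx : ∀ x ∈ Ω, u (tb,x) ≤ u (tb,xb))
    (heq : deriv (fun s => u (s, xb)) tb =
      d * lap (fun y => u (tb,y)) xb + (∑ i, B i * pd i (fun y => u (tb,y)) xb) + c) :
    False := by
  set f : (Fin 3 → ℝ) → ℝ := fun y => u (tb, y) with hfdef
  have hf : ContDiff ℝ (⊤ : ℕ∞) f := hu.comp (contDiff_const.prodMk contDiff_id)
  have hpd0 : ∀ i, pd i f xb = 0 := fun i => aux_pd_eq_zero hΩo hx hmx i
  have hlap : lap f xb ≤ 0 := by
    rw [lap]
    exact Finset.sum_nonpos fun i _ => aux_pd2_nonpos hf hΩo hx hmx i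
  have hsum : (∑ i, B i * pd i f xb) = 0 := by simp [hpd0]
  set g : ℝ → ℝ := fun s => u (s, xb) with hgdef
  have hg : ContDiff ℝ (⊤ : ℕ∞) g := hu.comp (contDiff_id.prodMk contDiff_const)
  have hgd : HasDerivAt g (deriv g tb) tb := (hg.differentiable (by simp) tb).hasDerivAt
  have hhd : HasDerivAt (fun s => g s - ε * (s - t₀)) (deriv g tb - ε) tb := by
    have h2 : HasDerivAt (fun s : ℝ => ε * (s - t₀)) ε tb := by
      simpa using (((hasDerivAt_id tb).sub_const t₀).const_mul ε)
    exact hgd.sub h2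
  have htime : 0 ≤ deriv g tb - ε := aux_deriv_nonneg_right_max hhd ht hmt
  have hrhs : d * lap f xb ≤ 0 := mul_nonpos_of_nonneg_of_nonpos hd.le hlap
  have : deriv g tb = d * lap f xb + (∑ i, B i * pd i f xb) + c := heq
  rw [hsum] at this
  linarith

lemma aux_prop_upper {Ω : Set (Fin 3 → ℝ)} (hΩo : IsOpen Ω) (hΩb : Bornology.IsBounded Ω)
    {d₁ d₂ : ℝ} (hd₁ : 0 < d₁) (hd₂ : 0 < d₂)
    (b₁ b₂ : ℝ × (Fin 3 → ℝ) → Fin 3 → ℝ)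
    (q₁ q₂ : ℝ × (Fin 3 → ℝ) → ℝ)
    {u₁ u₂ : ℝ × (Fin 3 → ℝ) → ℝ} (hu₁ : ContDiff ℝ (⊤ : ℕ∞) u₁) (hu₂ : ContDiff ℝ (⊤ : ℕ∞) u₂)
    (t₀ : ℝ)
    (hq₁ : ∀ t ≥ t₀, ∀ x ∈ Ω, 0 ≤ q₁ (t,x)) (hq₂ : ∀ t ≥ t₀, ∀ x ∈ Ω, 0 ≤ q₂ (t,x))
    (heq₁ : ∀ t ≥ t₀, ∀ x ∈ Ω, deriv (fun s => u₁ (s,x)) t =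
      d₁ * lap (fun y => u₁ (t,y)) x + (∑ i, b₁ (t,x) i * pd i (fun y => u₁ (t,y)) x)
        + q₁ (t,x) * (u₂ (t,x) - u₁ (t,x)))
    (heq₂ : ∀ t ≥ t₀, ∀ x ∈ Ω, deriv (fun s => u₂ (s,x)) t =
      d₂ * lap (fun y => u₂ (t,y)) x + (∑ i, b₂ (t,x) i * pd i (fun y => u₂ (t,y)) x)
        + q₂ (t,x) * (u₁ (t,x) - u₂ (t,x)))
    (hbc₁ : ∀ t ≥ t₀, ∀ x ∈ frontier Ω, u₁ (t,x) = u₁ (t₀,x))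
    (hbc₂ : ∀ t ≥ t₀, ∀ x ∈ frontier Ω, u₂ (t,x) = u₂ (t₀,x))
    {M : ℝ} (hM : ∀ x ∈ closure Ω, u₁ (t₀,x) ≤ M ∧ u₂ (t₀,x) ≤ M) :
    ∀ t ≥ t₀, ∀ x ∈ closure Ω, u₁ (t,x) ≤ M ∧ u₂ (t,x) ≤ M := by
  intro t₁ ht₁ x₁ hx₁
  rw [← max_le_iff]
  by_contra hcon
  push_neg at hcon
  set W : ℝ × (Fin 3 → ℝ) → ℝ := fun q => max (u₁ q) (u₂ q) with hWdef
  set ε : ℝ := (W (t₁, x₁) - M) / (t₁ - t₀ + 1) with hεdef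
  have hden : 0 < t₁ - t₀ + 1 := by linarith
  have hε : 0 < ε := div_pos (by linarith [hcon]) hden
  set F : ℝ × (Fin 3 → ℝ) → ℝ := fun q => W q - ε * (q.1 - t₀) with hFdef
  set K : Set (ℝ × (Fin 3 → ℝ)) := Icc t₀ t₁ ×ˢ closure Ω with hKdef
  have hKc : IsCompact K := isCompact_Icc.prod hΩb.isCompact_closure
  have hKne : (t₁, x₁) ∈ K := ⟨⟨ht₁, le_refl _⟩, hx₁⟩
  have hFc : Continuous F :=
    ((hu₁.continuous.max hu₂.continuous).sub (continuous_const.mul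
      ((continuous_fst.sub continuous_const))))
  obtain ⟨z, hzK, hz⟩ := hKc.exists_isMaxOn ⟨(t₁, x₁), hKne⟩ hFc.continuousOn
  obtain ⟨tb, xb⟩ := z
  have hzle : ∀ q ∈ K, F q ≤ F (tb, xb) := fun q hq => hz hq
  have hMF : M < F (tb, xb) := by
    have h1 : F (t₁, x₁) ≤ F (tb, xb) := hzle _ hKne
    have h2 : ε * (t₁ - t₀) < W (t₁, x₁) - M := by
      have : ε * (t₁ - t₀ + 1) = W (t₁, x₁) - M := by
        rw [hεdef, div_mul_cancel₀ _ hden.ne']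
      nlinarith
    have : M < F (t₁, x₁) := by
      simp only [hFdef]
      linarith
    linarith
  have htb0 : t₀ ≤ tb := hzK.1.1
  have htb1 : tb ≤ t₁ := hzK.1.2
  have hxbcl : xb ∈ closure Ω := hzK.2
  have hxb : xb ∈ Ω := by
    by_contra hxbn
    have hfr : xb ∈ frontier Ω := by
      rw [hΩo.frontier_eq]; exact ⟨hxbcl, hxbn⟩
    have e1 : u₁ (tb, xb) = u₁ (t₀, xb) := hbc₁ tb htb0 xb hfr
    have e2 : u₂ (tb, xb) = u₂ (t₀, xb) := hbc₂ tb htb0 xb hfr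
    have hle : W (tb, xb) ≤ M := by
      have := hM xb hxbcl
      simp only [hWdef, e1, e2, max_le_iff]
      exact this
    have : F (tb, xb) ≤ M := by
      simp only [hFdef]
      nlinarith
    linarith
  have htb : t₀ < tb := by
    rcases lt_or_eq_of_le htb0 with h | h
    · exact h
    · exfalso
      subst h
      have hle : W (t₀, xb) ≤ M := by
        simpa [hWdef, max_le_iff] using hM xb hxbcl
      have : F (t₀, xb) ≤ M := by
        simp only [hFdef]
        simpa using hle
      linarith
  rcases le_total (u₂ (tb, xb)) (u₁ (tb, xb)) with hcase | hcase
  · have hWz : W (tb, xb) = u₁ (tb, xb) := max_eq_left hcase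
    refine aux_core_contra hΩo hu₁ htb hxb hε hd₁ (b₁ (tb, xb)) ?_ ?_ ?_ (heq₁ tb htb0 xb hxb)
    · exact mul_nonpos_of_nonneg_of_nonpos (hq₁ tb htb0 xb hxb) (by linarith)
    · intro s hs
      have hsK : (s, xb) ∈ K := ⟨⟨hs.1, le_trans hs.2 htb1⟩, hxbcl⟩
      have := hzle _ hsK
      simp only [hFdef, hWz] at this
      have hu1le : u₁ (s, xb) ≤ W (s, xb) := le_max_left _ _
      linarith
    · intro x hx
      have hxK : (tb, x) ∈ K := ⟨⟨htb0, htb1⟩, subset_closure hx⟩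
      have := hzle _ hxK
      simp only [hFdef, hWz] at this
      have : W (tb, x) ≤ u₁ (tb, xb) := by linarith
      exact le_trans (le_max_left _ _) this
  · have hWz : W (tb, xb) = u₂ (tb, xb) := max_eq_right hcase
    refine aux_core_contra hΩo hu₂ htb hxb hε hd₂ (b₂ (tb, xb)) ?_ ?_ ?_ (heq₂ tb htb0 xb hxb)
    · exact mul_nonpos_of_nonneg_of_nonpos (hq₂ tb htb0 xb hxb) (by linarith)
    · intro s hs
      have hsK : (s, xb) ∈ K := ⟨⟨hs.1, le_trans hs.2 htb1⟩, hxbcl⟩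
      have := hzle _ hsK
      simp only [hFdef, hWz] at this
      have hu2le : u₂ (s, xb) ≤ W (s, xb) := le_max_right _ _
      linarith
    · intro x hx
      have hxK : (tb, x) ∈ K := ⟨⟨htb0, htb1⟩, subset_closure hx⟩
      have := hzle _ hxK
      simp only [hFdef, hWz] at this
      have : W (tb, x) ≤ u₂ (tb, xb) := by linarith
      exact le_trans (le_max_right _ _) this

lemma aux_prop_lower {Ω : Set (Fin 3 → ℝ)} (hΩo : IsOpen Ω) (hΩb : Bornology.IsBounded Ω)
    {d₁ d₂ : ℝ} (hd₁ : 0 < d₁) (hd₂ : 0 < d₂)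
    (b₁ b₂ : ℝ × (Fin 3 → ℝ) → Fin 3 → ℝ)
    (q₁ q₂ : ℝ × (Fin 3 → ℝ) → ℝ)
    {u₁ u₂ : ℝ × (Fin 3 → ℝ) → ℝ} (hu₁ : ContDiff ℝ (⊤ : ℕ∞) u₁) (hu₂ : ContDiff ℝ (⊤ : ℕ∞) u₂)
    (t₀ : ℝ)
    (hq₁ : ∀ t ≥ t₀, ∀ x ∈ Ω, 0 ≤ q₁ (t,x)) (hq₂ : ∀ t ≥ t₀, ∀ x ∈ Ω, 0 ≤ q₂ (t,x))
    (heq₁ : ∀ t ≥ t₀, ∀ x ∈ Ω, deriv (fun s => u₁ (s,x)) t =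
      d₁ * lap (fun y => u₁ (t,y)) x + (∑ i, b₁ (t,x) i * pd i (fun y => u₁ (t,y)) x)
        + q₁ (t,x) * (u₂ (t,x) - u₁ (t,x)))
    (heq₂ : ∀ t ≥ t₀, ∀ x ∈ Ω, deriv (fun s => u₂ (s,x)) t =
      d₂ * lap (fun y => u₂ (t,y)) x + (∑ i, b₂ (t,x) i * pd i (fun y => u₂ (t,y)) x)
        + q₂ (t,x) * (u₁ (t,x) - u₂ (t,x)))
    (hbc₁ : ∀ t ≥ t₀, ∀ x ∈ frontier Ω, u₁ (t,x) = u₁ (t₀,x))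
    (hbc₂ : ∀ t ≥ t₀, ∀ x ∈ frontier Ω, u₂ (t,x) = u₂ (t₀,x))
    {m : ℝ} (hm : ∀ x ∈ closure Ω, m ≤ u₁ (t₀,x) ∧ m ≤ u₂ (t₀,x)) :
    ∀ t ≥ t₀, ∀ x ∈ closure Ω, m ≤ u₁ (t,x) ∧ m ≤ u₂ (t,x) := by
  have key := aux_prop_upper (u₁ := fun q => -u₁ q) (u₂ := fun q => -u₂ q) (M := -m)
    hΩo hΩb hd₁ hd₂ b₁ b₂ q₁ q₂ hu₁.neg hu₂.neg t₀ hq₁ hq₂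
    (fun t ht x hx => by
      have h := heq₁ t ht x hx
      have hd : deriv (fun s => -u₁ (s, x)) t = -deriv (fun s => u₁ (s, x)) t := deriv.neg
      rw [hd, h, aux_lap_neg]
      have hpd : ∀ i : Fin 3, pd i (fun y => -u₁ (t, y)) x = -pd i (fun y => u₁ (t, y)) x :=
        fun i => aux_pd_neg i (fun y => u₁ (t, y)) x
      simp only [hpd, mul_neg, Finset.sum_neg_distrib]
      ring)
    (fun t ht x hx => by
      have h := heq₂ t ht x hx
      have hd : deriv (fun s => -u₂ (s, x)) t = -deriv (fun s => u₂ (s, x)) t := deriv.neg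
      rw [hd, h, aux_lap_neg]
      have hpd : ∀ i : Fin 3, pd i (fun y => -u₂ (t, y)) x = -pd i (fun y => u₂ (t, y)) x :=
        fun i => aux_pd_neg i (fun y => u₂ (t, y)) x
      simp only [hpd, mul_neg, Finset.sum_neg_distrib]
      ring)
    (fun t ht x hx => by show -u₁ (t,x) = -u₁ (t₀,x); rw [hbc₁ t ht x hx])
    (fun t ht x hx => by show -u₂ (t,x) = -u₂ (t₀,x); rw [hbc₂ t ht x hx])
    (fun x hx => ⟨neg_le_neg (hm x hx).1, neg_le_neg (hm x hx).2⟩)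
  intro t ht x hx
  have := key t ht x hx
  exact ⟨neg_le_neg_iff.mp (by simpa using this.1), neg_le_neg_iff.mp (by simpa using this.2)⟩

end Auxiliary

/-- **Proposition 3.2 (I').** Maximum/minimum principle for a two-by-two
parabolic system with unequal diffusivities: nonnegative smooth solutions with
positive time-independent Dirichlet data are bounded between the minimum and the
maximum of the initial and boundary data, and the extremal functions
`V̄(t) = maxᵢ sup_Ω vᵢ(t,·)`, `V̲(t) = minᵢ inf_Ω vᵢ(t,·)` are respectively
nonincreasing and nondecreasing on `(0,∞)`. -/
theorem parabolic_system_max_principle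
    (Ω : Set (Fin 3 → ℝ)) (hΩo : IsOpen Ω) (hΩc : IsConnected Ω)
    (hΩb : Bornology.IsBounded Ω)
    (d₁ d₂ : ℝ) (hd₁ : 0 < d₁) (hd₂ : 0 < d₂)
    (b₁ b₂ : ℝ × (Fin 3 → ℝ) → Fin 3 → ℝ)
    (hb₁ : ContDiff ℝ (⊤ : ℕ∞) b₁) (hb₂ : ContDiff ℝ (⊤ : ℕ∞) b₂)
    (p₁ p₂ : ℝ × (Fin 3 → ℝ) → ℝ)
    (hp₁s : ContDiff ℝ (⊤ : ℕ∞) p₁) (hp₂s : ContDiff ℝ (⊤ : ℕ∞) p₂)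
    (hp₁ : ∀ t ≥ (0:ℝ), ∀ x ∈ closure Ω, 0 ≤ p₁ (t, x))
    (hp₂ : ∀ t ≥ (0:ℝ), ∀ x ∈ closure Ω, 0 ≤ p₂ (t, x))
    (v₁ v₂ : ℝ × (Fin 3 → ℝ) → ℝ)
    (hv₁s : ContDiff ℝ (⊤ : ℕ∞) v₁) (hv₂s : ContDiff ℝ (⊤ : ℕ∞) v₂)
    (hv₁n : ∀ t ≥ (0:ℝ), ∀ x ∈ closure Ω, 0 ≤ v₁ (t, x))
    (hv₂n : ∀ t ≥ (0:ℝ), ∀ x ∈ closure Ω, 0 ≤ v₂ (t, x))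
    -- ∂ₜv₁ = d₁Δv₁ + b₁·∇v₁ − p₁(v₁ − v₂)
    (heq₁ : ∀ t ≥ (0:ℝ), ∀ x ∈ Ω,
      deriv (fun s => v₁ (s, x)) t =
        d₁ * lap (fun y => v₁ (t, y)) x
          + (∑ i, b₁ (t, x) i * pd i (fun y => v₁ (t, y)) x)
          - p₁ (t, x) * (v₁ (t, x) - v₂ (t, x)))
    -- ∂ₜv₂ = d₂Δv₂ + b₂·∇v₂ + p₂(v₁ − v₂)
    (heq₂ : ∀ t ≥ (0:ℝ), ∀ x ∈ Ω,
      deriv (fun s => v₂ (s, x)) t =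
        d₂ * lap (fun y => v₂ (t, y)) x
          + (∑ i, b₂ (t, x) i * pd i (fun y => v₂ (t, y)) x)
          + p₂ (t, x) * (v₁ (t, x) - v₂ (t, x)))
    (g₁ g₂ : (Fin 3 → ℝ) → ℝ)
    (hg₁c : ContinuousOn g₁ (frontier Ω)) (hg₂c : ContinuousOn g₂ (frontier Ω))
    (hg₁p : ∀ x ∈ frontier Ω, 0 < g₁ x) (hg₂p : ∀ x ∈ frontier Ω, 0 < g₂ x)
    (hbc₁ : ∀ t ≥ (0:ℝ), ∀ x ∈ frontier Ω, v₁ (t, x) = g₁ x)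
    (hbc₂ : ∀ t ≥ (0:ℝ), ∀ x ∈ frontier Ω, v₂ (t, x) = g₂ x) :
    (∀ t ≥ (0:ℝ), ∀ x ∈ closure Ω, ∀ v ∈ ({v₁, v₂} : Set (ℝ × (Fin 3 → ℝ) → ℝ)),
      min (min (sInf ((fun y => v₁ (0, y)) '' Ω)) (sInf ((fun y => v₂ (0, y)) '' Ω)))
          (min (sInf (g₁ '' frontier Ω)) (sInf (g₂ '' frontier Ω))) ≤ v (t, x)
      ∧ v (t, x) ≤
        max (max (sSup ((fun y => v₁ (0, y)) '' Ω)) (sSup ((fun y => v₂ (0, y)) '' Ω)))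
          (max (sSup (g₁ '' frontier Ω)) (sSup (g₂ '' frontier Ω))))
    ∧ AntitoneOn
        (fun t => max (sSup ((fun y => v₁ (t, y)) '' Ω)) (sSup ((fun y => v₂ (t, y)) '' Ω)))
        (Set.Ioi (0:ℝ))
    ∧ MonotoneOn
        (fun t => min (sInf ((fun y => v₁ (t, y)) '' Ω)) (sInf ((fun y => v₂ (t, y)) '' Ω)))
        (Set.Ioi (0:ℝ)) := by
  have hc₁ : ∀ s : ℝ, Continuous (fun y => v₁ (s, y)) :=
    fun s => hv₁s.continuous.comp (Continuous.prodMk_right s)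
  have hc₂ : ∀ s : ℝ, Continuous (fun y => v₂ (s, y)) :=
    fun s => hv₂s.continuous.comp (Continuous.prodMk_right s)
  refine ⟨?_, ?_, ?_⟩
  · -- part 1
    intro t ht x hx v hv
    have hq₁' : ∀ τ ≥ (0:ℝ), ∀ y ∈ Ω, 0 ≤ p₁ (τ, y) :=
      fun τ hτ y hy => hp₁ τ hτ y (subset_closure hy)
    have hq₂' : ∀ τ ≥ (0:ℝ), ∀ y ∈ Ω, 0 ≤ p₂ (τ, y) :=
      fun τ hτ y hy => hp₂ τ hτ y (subset_closure hy)
    have heq₁' : ∀ τ ≥ (0:ℝ), ∀ y ∈ Ω, deriv (fun s => v₁ (s, y)) τ =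
        d₁ * lap (fun z => v₁ (τ, z)) y
          + (∑ i, b₁ (τ, y) i * pd i (fun z => v₁ (τ, z)) y)
          + p₁ (τ, y) * (v₂ (τ, y) - v₁ (τ, y)) :=
      fun τ hτ y hy => by rw [heq₁ τ hτ y hy]; ring
    have heq₂' : ∀ τ ≥ (0:ℝ), ∀ y ∈ Ω, deriv (fun s => v₂ (s, y)) τ =
        d₂ * lap (fun z => v₂ (τ, z)) y
          + (∑ i, b₂ (τ, y) i * pd i (fun z => v₂ (τ, z)) y)
          + p₂ (τ, y) * (v₁ (τ, y) - v₂ (τ, y)) :=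
      fun τ hτ y hy => by rw [heq₂ τ hτ y hy]
    have hbc₁' : ∀ τ ≥ (0:ℝ), ∀ y ∈ frontier Ω, v₁ (τ, y) = v₁ (0, y) :=
      fun τ hτ y hy => by rw [hbc₁ τ hτ y hy, hbc₁ 0 le_rfl y hy]
    have hbc₂' : ∀ τ ≥ (0:ℝ), ∀ y ∈ frontier Ω, v₂ (τ, y) = v₂ (0, y) :=
      fun τ hτ y hy => by rw [hbc₂ τ hτ y hy, hbc₂ 0 le_rfl y hy]
    have hMup : ∀ y ∈ closure Ω,
        v₁ (0, y) ≤ max (sSup ((fun z => v₁ (0, z)) '' Ω)) (sSup ((fun z => v₂ (0, z)) '' Ω))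
        ∧ v₂ (0, y) ≤ max (sSup ((fun z => v₁ (0, z)) '' Ω)) (sSup ((fun z => v₂ (0, z)) '' Ω)) :=
      fun y hy => ⟨le_trans (aux_le_sSup_closure (hc₁ 0) hΩb hy) (le_max_left _ _),
        le_trans (aux_le_sSup_closure (hc₂ 0) hΩb hy) (le_max_right _ _)⟩
    have hmlo : ∀ y ∈ closure Ω,
        min (sInf ((fun z => v₁ (0, z)) '' Ω)) (sInf ((fun z => v₂ (0, z)) '' Ω)) ≤ v₁ (0, y)
        ∧ min (sInf ((fun z => v₁ (0, z)) '' Ω)) (sInf ((fun z => v₂ (0, z)) '' Ω)) ≤ v₂ (0, y) :=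
      fun y hy => ⟨le_trans (min_le_left _ _) (aux_sInf_le_closure (hc₁ 0) hΩb hy),
        le_trans (min_le_right _ _) (aux_sInf_le_closure (hc₂ 0) hΩb hy)⟩
    have upper := aux_prop_upper hΩo hΩb hd₁ hd₂ b₁ b₂ p₁ p₂ hv₁s hv₂s 0
      hq₁' hq₂' heq₁' heq₂' hbc₁' hbc₂' hMup t ht x hx
    have lower := aux_prop_lower hΩo hΩb hd₁ hd₂ b₁ b₂ p₁ p₂ hv₁s hv₂s 0
      hq₁' hq₂' heq₁' heq₂' hbc₁' hbc₂' hmlo t ht x hx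
    simp only [Set.mem_insert_iff, Set.mem_singleton_iff] at hv
    rcases hv with rfl | rfl
    · exact ⟨le_trans (min_le_left _ _) lower.1, le_trans upper.1 (le_max_left _ _)⟩
    · exact ⟨le_trans (min_le_left _ _) lower.2, le_trans upper.2 (le_max_left _ _)⟩
  · -- antitone
    intro s hs t ht hst
    have hs0 : (0:ℝ) < s := hs
    have hq₁' : ∀ τ ≥ s, ∀ y ∈ Ω, 0 ≤ p₁ (τ, y) :=
      fun τ hτ y hy => hp₁ τ (le_trans hs0.le hτ) y (subset_closure hy)
    have hq₂' : ∀ τ ≥ s, ∀ y ∈ Ω, 0 ≤ p₂ (τ, y) :=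
      fun τ hτ y hy => hp₂ τ (le_trans hs0.le hτ) y (subset_closure hy)
    have heq₁' : ∀ τ ≥ s, ∀ y ∈ Ω, deriv (fun σ => v₁ (σ, y)) τ =
        d₁ * lap (fun z => v₁ (τ, z)) y
          + (∑ i, b₁ (τ, y) i * pd i (fun z => v₁ (τ, z)) y)
          + p₁ (τ, y) * (v₂ (τ, y) - v₁ (τ, y)) :=
      fun τ hτ y hy => by rw [heq₁ τ (le_trans hs0.le hτ) y hy]; ring
    have heq₂' : ∀ τ ≥ s, ∀ y ∈ Ω, deriv (fun σ => v₂ (σ, y)) τ =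
        d₂ * lap (fun z => v₂ (τ, z)) y
          + (∑ i, b₂ (τ, y) i * pd i (fun z => v₂ (τ, z)) y)
          + p₂ (τ, y) * (v₁ (τ, y) - v₂ (τ, y)) :=
      fun τ hτ y hy => by rw [heq₂ τ (le_trans hs0.le hτ) y hy]
    have hbc₁' : ∀ τ ≥ s, ∀ y ∈ frontier Ω, v₁ (τ, y) = v₁ (s, y) :=
      fun τ hτ y hy => by rw [hbc₁ τ (le_trans hs0.le hτ) y hy, hbc₁ s hs0.le y hy]
    have hbc₂' : ∀ τ ≥ s, ∀ y ∈ frontier Ω, v₂ (τ, y) = v₂ (s, y) :=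
      fun τ hτ y hy => by rw [hbc₂ τ (le_trans hs0.le hτ) y hy, hbc₂ s hs0.le y hy]
    have hMup : ∀ y ∈ closure Ω,
        v₁ (s, y) ≤ max (sSup ((fun z => v₁ (s, z)) '' Ω)) (sSup ((fun z => v₂ (s, z)) '' Ω))
        ∧ v₂ (s, y) ≤ max (sSup ((fun z => v₁ (s, z)) '' Ω)) (sSup ((fun z => v₂ (s, z)) '' Ω)) :=
      fun y hy => ⟨le_trans (aux_le_sSup_closure (hc₁ s) hΩb hy) (le_max_left _ _),
        le_trans (aux_le_sSup_closure (hc₂ s) hΩb hy) (le_max_right _ _)⟩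
    have key := aux_prop_upper hΩo hΩb hd₁ hd₂ b₁ b₂ p₁ p₂ hv₁s hv₂s s
      hq₁' hq₂' heq₁' heq₂' hbc₁' hbc₂' hMup t hst
    refine max_le (csSup_le ((hΩc.nonempty).image _) ?_) (csSup_le ((hΩc.nonempty).image _) ?_)
    · rintro r ⟨y, hy, rfl⟩
      exact (key y (subset_closure hy)).1
    · rintro r ⟨y, hy, rfl⟩
      exact (key y (subset_closure hy)).2
  · -- monotone
    intro s hs t ht hst
    have hs0 : (0:ℝ) < s := hs
    have hq₁' : ∀ τ ≥ s, ∀ y ∈ Ω, 0 ≤ p₁ (τ, y) :=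
      fun τ hτ y hy => hp₁ τ (le_trans hs0.le hτ) y (subset_closure hy)
    have hq₂' : ∀ τ ≥ s, ∀ y ∈ Ω, 0 ≤ p₂ (τ, y) :=
      fun τ hτ y hy => hp₂ τ (le_trans hs0.le hτ) y (subset_closure hy)
    have heq₁' : ∀ τ ≥ s, ∀ y ∈ Ω, deriv (fun σ => v₁ (σ, y)) τ =
        d₁ * lap (fun z => v₁ (τ, z)) y
          + (∑ i, b₁ (τ, y) i * pd i (fun z => v₁ (τ, z)) y)
          + p₁ (τ, y) * (v₂ (τ, y) - v₁ (τ, y)) :=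
      fun τ hτ y hy => by rw [heq₁ τ (le_trans hs0.le hτ) y hy]; ring
    have heq₂' : ∀ τ ≥ s, ∀ y ∈ Ω, deriv (fun σ => v₂ (σ, y)) τ =
        d₂ * lap (fun z => v₂ (τ, z)) y
          + (∑ i, b₂ (τ, y) i * pd i (fun z => v₂ (τ, z)) y)
          + p₂ (τ, y) * (v₁ (τ, y) - v₂ (τ, y)) :=
      fun τ hτ y hy => by rw [heq₂ τ (le_trans hs0.le hτ) y hy]
    have hbc₁' : ∀ τ ≥ s, ∀ y ∈ frontier Ω, v₁ (τ, y) = v₁ (s, y) :=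
      fun τ hτ y hy => by rw [hbc₁ τ (le_trans hs0.le hτ) y hy, hbc₁ s hs0.le y hy]
    have hbc₂' : ∀ τ ≥ s, ∀ y ∈ frontier Ω, v₂ (τ, y) = v₂ (s, y) :=
      fun τ hτ y hy => by rw [hbc₂ τ (le_trans hs0.le hτ) y hy, hbc₂ s hs0.le y hy]
    have hmlo : ∀ y ∈ closure Ω,
        min (sInf ((fun z => v₁ (s, z)) '' Ω)) (sInf ((fun z => v₂ (s, z)) '' Ω)) ≤ v₁ (s, y)
        ∧ min (sInf ((fun z => v₁ (s, z)) '' Ω)) (sInf ((fun z => v₂ (s, z)) '' Ω)) ≤ v₂ (s, y) :=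
      fun y hy => ⟨le_trans (min_le_left _ _) (aux_sInf_le_closure (hc₁ s) hΩb hy),
        le_trans (min_le_right _ _) (aux_sInf_le_closure (hc₂ s) hΩb hy)⟩
    have key := aux_prop_lower hΩo hΩb hd₁ hd₂ b₁ b₂ p₁ p₂ hv₁s hv₂s s
      hq₁' hq₂' heq₁' heq₂' hbc₁' hbc₂' hmlo t hst
    refine le_min (le_csInf ((hΩc.nonempty).image _) ?_) (le_csInf ((hΩc.nonempty).image _) ?_)
    · rintro r ⟨y, hy, rfl⟩
      exact (key y (subset_closure hy)).1
    · rintro r ⟨y, hy, rfl⟩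
      exact (key y (subset_closure hy)).2
end

section
/- Let V : [0,∞) → ℝ be continuous and define W(t) = min_{s∈[0,t]} V(s). Let t > 0 be such that both V and W are differentiable at t and W′(t) < 0. Then W(t) = V(t) and W′(t) = V′(t). -/
/-!
Where `W(t) < V(t)`, continuity keeps `V` above `W(t)` just to the right of `t`, so the minimum
does not move there and the right derivative of `W` at `t` is `≥ 0`; hence `W′(t) < 0` forces
`W(t) = V(t)`. Then `V - W ≥ 0` on `[0, ∞)` vanishes at the interior point `t`, so it has a local
minimum there and `V′(t) - W′(t) = 0`.
-/

open Set Filter Topology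

theorem HasDerivWithinAt.nonneg_of_eventually_ge {f : ℝ → ℝ} {f' a : ℝ}
    (hf : HasDerivWithinAt f f' (Ioi a) a) (h : ∀ᶠ x in 𝓝[>] a, f a ≤ f x) : 0 ≤ f' := by
  rw [hasDerivWithinAt_iff_tendsto_slope' Set.self_notMem_Ioi] at hf
  refine ge_of_tendsto hf ?_
  filter_upwards [h, self_mem_nhdsWithin] with x hx hax
  rw [slope_def_field]
  exact div_nonneg (sub_nonneg.2 hx) (sub_nonneg.2 hax.le)

section RunningMin

variable {V : ℝ → ℝ} {a b : ℝ}

theorem csInf_image_Icc_le (hV : ContinuousOn V (Icc a b)) {u : ℝ} (hu : u ∈ Icc a b) :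
    sInf (V '' Icc a b) ≤ V u :=
  csInf_le (isCompact_Icc.image_of_continuousOn hV).bddBelow (mem_image_of_mem V hu)

theorem eventually_csInf_image_Icc_le (hV : ContinuousOn V (Icc a b)) (hVb : ContinuousAt V b)
    (hab : a ≤ b) (hlt : sInf (V '' Icc a b) < V b) :
    ∀ᶠ s in 𝓝[>] b, sInf (V '' Icc a b) ≤ sInf (V '' Icc a s) := by
  have hVabove : ∀ᶠ s in 𝓝[>] b, sInf (V '' Icc a b) < V s :=
    nhdsWithin_le_nhds (hVb.eventually (Ioi_mem_nhds hlt))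
  obtain ⟨c, hbc, hc⟩ := mem_nhdsGT_iff_exists_Ioo_subset.1 hVabove
  filter_upwards [Ioo_mem_nhdsGT hbc] with s ⟨hbs, hsc⟩
  refine le_csInf (image_nonempty.2 (nonempty_Icc.2 (hab.trans hbs.le))) ?_
  rintro _ ⟨u, ⟨hau, hus⟩, rfl⟩
  rcases le_or_gt u b with hub | hbu
  · exact csInf_image_Icc_le hV ⟨hau, hub⟩
  · exact (hc ⟨hbu, hus.trans_lt hsc⟩).le

end RunningMin

/-- **Lemma 3.3 (iii).** If the running minimum `W(t) = min_{[0,t]} V` of a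
continuous function `V` is differentiable at `t > 0` with `W′(t) < 0`, then
`W(t) = V(t)` and `W′(t) = V′(t)`. -/
theorem running_min_strict_decrease
    (V : ℝ → ℝ) (hV : ContinuousOn V (Set.Ici 0))
    (W : ℝ → ℝ) (hW : ∀ t ≥ (0:ℝ), W t = sInf (V '' Set.Icc 0 t))
    (t : ℝ) (ht : 0 < t)
    (hVd : DifferentiableAt ℝ V t) (hWd : DifferentiableAt ℝ W t)
    (hW' : deriv W t < 0) :
    W t = V t ∧ deriv W t = deriv V t := by
  have hVIcc : ∀ s, ContinuousOn V (Icc 0 s) := fun s => hV.mono Icc_subset_Ici_self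
  have hWle : ∀ s ≥ (0:ℝ), W s ≤ V s := fun s hs =>
    (hW s hs).trans_le (csInf_image_Icc_le (hVIcc s) ⟨hs, le_rfl⟩)
  have hWV : W t = V t := by
    by_contra hne
    have hlt : sInf (V '' Icc 0 t) < V t := hW t ht.le ▸ (hWle t ht.le).lt_of_ne hne
    have hWge : ∀ᶠ s in 𝓝[>] t, W t ≤ W s := by
      filter_upwards [eventually_csInf_image_Icc_le (hVIcc t) (hV.continuousAt (Ici_mem_nhds ht))
        ht.le hlt, self_mem_nhdsWithin] with s hs hts
      rwa [hW t ht.le, hW s (ht.trans hts).le]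
    exact hW'.not_ge (hWd.hasDerivAt.hasDerivWithinAt.nonneg_of_eventually_ge hWge)
  have hmin : IsLocalMin (V - W) t := by
    filter_upwards [Ici_mem_nhds ht] with s hs
    simpa [hWV] using hWle s hs
  have hderiv := hmin.hasDerivAt_eq_zero (hVd.hasDerivAt.sub hWd.hasDerivAt)
  exact ⟨hWV, by linarith⟩
end

section
/- Let L > 0, ε > 0, and let c₁, c₂, Φ : ℝ → ℝ be smooth functions satisfying on [0,L]: (c₁′ + c₁Φ′)′ = 0, (c₂′ − c₂Φ′)′ = 0, and −εΦ″ = c₁ − c₂, with boundary values c₁(0) = α₁ > 0, c₂(0) = α₂ > 0, c₁(L) = β₁ > 0, c₂(L) = β₂ > 0, Φ(0) = −V with V > 0, and Φ(L) = 0. Define η₁(x) = c₁(x)e^{Φ(x)} and η₂(x) = c₂(x)e^{−Φ(x)}. Then for i = 1,2 and all x ∈ [0,L]: min{αᵢ e^{−zᵢV}, βᵢ} ≤ ηᵢ(x) ≤ max{αᵢ e^{−zᵢV}, βᵢ}, where z₁ = 1 and z₂ = −1. -/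
open Set Real

private lemma slotboom_aux (L : ℝ) (hL : 0 < L) (c Φ : ℝ → ℝ)
    (hc : ContDiff ℝ (⊤ : ℕ∞) c) (hΦ : ContDiff ℝ (⊤ : ℕ∞) Φ)
    (heq : ∀ x ∈ Set.Icc 0 L, deriv (fun y => deriv c y + c y * deriv Φ y) x = 0) :
    ∀ x ∈ Set.Icc 0 L,
      min (c 0 * Real.exp (Φ 0)) (c L * Real.exp (Φ L)) ≤ c x * Real.exp (Φ x) ∧
      c x * Real.exp (Φ x) ≤ max (c 0 * Real.exp (Φ 0)) (c L * Real.exp (Φ L)) := by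
  set J : ℝ → ℝ := fun y => deriv c y + c y * deriv Φ y with hJ
  have hcd : Differentiable ℝ c := hc.differentiable (by simp)
  have hΦd : Differentiable ℝ Φ := hΦ.differentiable (by simp)
  have hc' : ContDiff ℝ (⊤ : ℕ∞) c := hc.of_le (by simp)
  have hΦ' : ContDiff ℝ (⊤ : ℕ∞) Φ := hΦ.of_le (by simp)
  have hdc : ContDiff ℝ (⊤ : ℕ∞) (deriv c) := (contDiff_infty_iff_deriv.mp hc').2
  have hdΦ : ContDiff ℝ (⊤ : ℕ∞) (deriv Φ) := (contDiff_infty_iff_deriv.mp hΦ').2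
  have hJd : Differentiable ℝ J :=
    (hdc.differentiable (by simp)).add (hcd.mul (hdΦ.differentiable (by simp)))
  set η : ℝ → ℝ := fun y => c y * Real.exp (Φ y) with hη
  have hηd : ∀ x, HasDerivAt η (J x * Real.exp (Φ x)) x := by
    intro x
    have h1 : HasDerivAt (fun y => Real.exp (Φ y)) (Real.exp (Φ x) * deriv Φ x) x :=
      (Real.hasDerivAt_exp (Φ x)).comp x (hΦd x).hasDerivAt
    have h2 : HasDerivAt η _ x := (hcd x).hasDerivAt.mul h1
    convert h2 using 1
    show (deriv c x + c x * deriv Φ x) * Real.exp (Φ x) = _; ring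
  have hηderiv : ∀ x, deriv η x = J x * Real.exp (Φ x) := fun x => (hηd x).deriv
  -- J is constant on [0, L]
  have hJconst : ∀ x ∈ Set.Icc 0 L, J x = J 0 := by
    apply constant_of_derivWithin_zero (hJd.differentiableOn)
    intro x hx
    rw [(hJd x).derivWithin ((uniqueDiffOn_Icc hL) x (Ico_subset_Icc_self hx))]
    exact heq x (Ico_subset_Icc_self hx)
  have hηcont : ContinuousOn η (Set.Icc 0 L) :=
    ((hcd.continuous).mul ((Real.continuous_exp).comp hΦd.continuous)).continuousOn
  have hηdiff : DifferentiableOn ℝ η (interior (Set.Icc 0 L)) :=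
    fun x _ => ((hηd x).differentiableAt).differentiableWithinAt
  have h0 : (0 : ℝ) ∈ Set.Icc 0 L := ⟨le_refl _, hL.le⟩
  have hLm : L ∈ Set.Icc 0 L := ⟨hL.le, le_refl _⟩
  rcases le_or_gt 0 (J 0) with hsgn | hsgn
  · have hmono : MonotoneOn η (Set.Icc 0 L) := by
      apply monotoneOn_of_deriv_nonneg (convex_Icc 0 L) hηcont hηdiff
      intro x hx
      rw [hηderiv]
      have := hJconst x (interior_subset hx)
      exact mul_nonneg (this ▸ hsgn) (Real.exp_pos _).le
    intro x hx
    exact ⟨le_trans (min_le_left _ _) (hmono h0 hx hx.1),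
      le_trans (hmono hx hLm hx.2) (le_max_right _ _)⟩
  · have hmono : AntitoneOn η (Set.Icc 0 L) := by
      apply antitoneOn_of_deriv_nonpos (convex_Icc 0 L) hηcont hηdiff
      intro x hx
      rw [hηderiv]
      have := hJconst x (interior_subset hx)
      exact mul_nonpos_of_nonpos_of_nonneg (this ▸ hsgn.le) (Real.exp_pos _).le
    intro x hx
    exact ⟨le_trans (min_le_right _ _) (hmono hx hLm hx.2),
      le_trans (hmono h0 hx hx.1) (le_max_left _ _)⟩

/-- **Proposition 4.1 (I).** For smooth solutions of the one-dimensional steady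
Nernst–Planck–Poisson system, the Slotboom variables `η₁ = c₁e^Φ`,
`η₂ = c₂e^{−Φ}` are bounded between their boundary values. -/
theorem slotboom_bounds
    (L ε V α₁ α₂ β₁ β₂ : ℝ) (hL : 0 < L) (hε : 0 < ε) (hV : 0 < V)
    (hα₁ : 0 < α₁) (hα₂ : 0 < α₂) (hβ₁ : 0 < β₁) (hβ₂ : 0 < β₂)
    (c₁ c₂ Φ : ℝ → ℝ)
    (hc₁ : ContDiff ℝ (⊤ : ℕ∞) c₁) (hc₂ : ContDiff ℝ (⊤ : ℕ∞) c₂) (hΦ : ContDiff ℝ (⊤ : ℕ∞) Φ)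
    (heq₁ : ∀ x ∈ Set.Icc 0 L, deriv (fun y => deriv c₁ y + c₁ y * deriv Φ y) x = 0)
    (heq₂ : ∀ x ∈ Set.Icc 0 L, deriv (fun y => deriv c₂ y - c₂ y * deriv Φ y) x = 0)
    (hpois : ∀ x ∈ Set.Icc 0 L, -(ε * deriv (deriv Φ) x) = c₁ x - c₂ x)
    (hc₁0 : c₁ 0 = α₁) (hc₂0 : c₂ 0 = α₂) (hc₁L : c₁ L = β₁) (hc₂L : c₂ L = β₂)
    (hΦ0 : Φ 0 = -V) (hΦL : Φ L = 0) :
    ∀ x ∈ Set.Icc 0 L,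
      (min (α₁ * Real.exp (-V)) β₁ ≤ c₁ x * Real.exp (Φ x) ∧
        c₁ x * Real.exp (Φ x) ≤ max (α₁ * Real.exp (-V)) β₁) ∧
      (min (α₂ * Real.exp V) β₂ ≤ c₂ x * Real.exp (-Φ x) ∧
        c₂ x * Real.exp (-Φ x) ≤ max (α₂ * Real.exp V) β₂) := by
  intro x hx
  have h1 := slotboom_aux L hL c₁ Φ hc₁ hΦ heq₁ x hx
  have hnegΦ : ContDiff ℝ (⊤ : ℕ∞) (fun y => -Φ y) := hΦ.neg
  have hderivneg : deriv (fun y => -Φ y) = fun y => -deriv Φ y := by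
    funext y; exact deriv.neg
  have heq₂' : ∀ y ∈ Set.Icc 0 L,
      deriv (fun z => deriv c₂ z + c₂ z * deriv (fun w => -Φ w) z) y = 0 := by
    intro y hy
    have : (fun z => deriv c₂ z + c₂ z * deriv (fun w => -Φ w) z)
        = fun z => deriv c₂ z - c₂ z * deriv Φ z := by
      funext z; rw [hderivneg]; ring
    rw [this]; exact heq₂ y hy
  have h2 := slotboom_aux L hL c₂ (fun y => -Φ y) hc₂ hnegΦ heq₂' x hx
  rw [hc₁0, hc₁L, hΦ0, hΦL, Real.exp_zero, mul_one] at h1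
  simp only [hc₂0, hc₂L, hΦ0, hΦL, neg_neg, neg_zero, Real.exp_zero, mul_one] at h2
  exact ⟨h1, h2⟩
end

section
/- Let L > 0, ε > 0, and let c₁, c₂, Φ : ℝ → ℝ be smooth functions satisfying on [0,L]: (c₁′ + c₁Φ′)′ = 0, (c₂′ − c₂Φ′)′ = 0, and −εΦ″ = c₁ − c₂, with boundary values c₁(0) = α₁ > 0, c₂(0) = α₂ > 0, c₁(L) = β₁ > 0, c₂(L) = β₂ > 0, Φ(0) = −V with V > 0, and Φ(L) = 0. With z₁ = 1, z₂ = −1, set λᵢ = min{αᵢ e^{−zᵢV}, βᵢ} and Λᵢ = max{αᵢ e^{−zᵢV}, βᵢ}. Then for all x ∈ [0,L]: min{−V, (1/2)·log(λ₁/Λ₂)} ≤ Φ(x) ≤ max{0, (1/2)·log(Λ₁/λ₂)}. -/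
open Set Filter Real Topology
open scoped ContDiff

/-- Slotboom-variable bound: if `(c' + σ c Φ')' = 0` on `[0,L]`, then
`g = c · exp(σ Φ)` is monotone, hence bounded by its endpoint values. -/
lemma slotboom_bounds_s14 (L σ : ℝ) (hL : 0 < L) (c Φ : ℝ → ℝ)
    (hc : ContDiff ℝ (⊤ : ℕ∞) c) (hΦ : ContDiff ℝ (⊤ : ℕ∞) Φ)
    (heq : ∀ x ∈ Set.Icc 0 L,
      deriv (fun y => deriv c y + σ * (c y * deriv Φ y)) x = 0) :
    ∀ x ∈ Set.Icc 0 L,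
      min (c 0 * Real.exp (σ * Φ 0)) (c L * Real.exp (σ * Φ L)) ≤ c x * Real.exp (σ * Φ x) ∧
      c x * Real.exp (σ * Φ x) ≤ max (c 0 * Real.exp (σ * Φ 0)) (c L * Real.exp (σ * Φ L)) := by
  have hc' : ContDiff ℝ ∞ (deriv c) := (contDiff_infty_iff_deriv.mp (hc.of_le (by simp))).2
  have hΦ' : ContDiff ℝ ∞ (deriv Φ) := (contDiff_infty_iff_deriv.mp (hΦ.of_le (by simp))).2
  set h : ℝ → ℝ := fun y => deriv c y + σ * (c y * deriv Φ y) with hh_def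
  set g : ℝ → ℝ := fun y => c y * Real.exp (σ * Φ y) with hg_def
  have hhC : ContDiff ℝ ∞ h := hc'.add (contDiff_const.mul ((hc.of_le (by simp)).mul hΦ'))
  have hconst : ∀ x ∈ Set.Icc 0 L, h x = h 0 := by
    apply constant_of_has_deriv_right_zero hhC.continuous.continuousOn
    intro x hx
    have h0 := heq x (Set.Ico_subset_Icc_self hx)
    have := (hhC.differentiable (by simp) x).hasDerivAt
    rw [h0] at this
    exact this.hasDerivWithinAt
  have hg : ∀ x, HasDerivAt g (h x * Real.exp (σ * Φ x)) x := by
    intro x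
    have hc1 : HasDerivAt c (deriv c x) x := (hc.differentiable (by simp) x).hasDerivAt
    have hΦ1 : HasDerivAt Φ (deriv Φ x) x := (hΦ.differentiable (by simp) x).hasDerivAt
    have he : HasDerivAt (fun y => Real.exp (σ * Φ y))
        (Real.exp (σ * Φ x) * (σ * deriv Φ x)) x := (hΦ1.const_mul σ).exp
    have : HasDerivAt (fun y => c y * Real.exp (σ * Φ y)) (deriv c x * Real.exp (σ * Φ x) +
        c x * (Real.exp (σ * Φ x) * (σ * deriv Φ x))) x := hc1.fun_mul he
    convert this using 1
    show (deriv c x + σ * (c x * deriv Φ x)) * Real.exp (σ * Φ x) = _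
    ring
  have hgd : ∀ x, deriv g x = h x * Real.exp (σ * Φ x) := fun x => (hg x).deriv
  have hgC : ContinuousOn g (Set.Icc 0 L) :=
    fun x _ => ((hg x).differentiableAt.continuousAt).continuousWithinAt
  have hgD : DifferentiableOn ℝ g (interior (Set.Icc 0 L)) :=
    fun x _ => (hg x).differentiableAt.differentiableWithinAt
  have h0mem : (0 : ℝ) ∈ Set.Icc 0 L := Set.left_mem_Icc.mpr hL.le
  have hLmem : L ∈ Set.Icc 0 L := Set.right_mem_Icc.mpr hL.le
  intro x hx
  rcases le_or_gt 0 (h 0) with hJ | hJ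
  · have hmono : MonotoneOn g (Set.Icc 0 L) := by
      apply monotoneOn_of_deriv_nonneg (convex_Icc 0 L) hgC hgD
      intro y hy
      rw [interior_Icc] at hy
      rw [hgd y, hconst y (Set.Ioo_subset_Icc_self hy)]
      exact mul_nonneg hJ (Real.exp_pos _).le
    exact ⟨le_trans (min_le_left _ _) (hmono h0mem hx hx.1),
      le_trans (hmono hx hLmem hx.2) (le_max_right _ _)⟩
  · have hanti : AntitoneOn g (Set.Icc 0 L) := by
      apply antitoneOn_of_deriv_nonpos (convex_Icc 0 L) hgC hgD
      intro y hy
      rw [interior_Icc] at hy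
      rw [hgd y, hconst y (Set.Ioo_subset_Icc_self hy)]
      exact mul_nonpos_of_nonpos_of_nonneg hJ.le (Real.exp_pos _).le
    exact ⟨le_trans (min_le_right _ _) (hanti hx hLmem hx.2),
      le_trans (hanti h0mem hx hx.1) (le_max_left _ _)⟩

/-- Second-derivative test at an interior local maximum. -/
lemma second_deriv_nonpos_of_isLocalMax (f : ℝ → ℝ) (hf : ContDiff ℝ (⊤ : ℕ∞) f) {x : ℝ}
    (h : IsLocalMax f x) : deriv (deriv f) x ≤ 0 := by
  by_contra hpos
  push_neg at hpos
  have hf' : ContDiff ℝ ∞ (deriv f) := (contDiff_infty_iff_deriv.mp (hf.of_le (by simp))).2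
  have hd0 : deriv f x = 0 := h.deriv_eq_zero
  have hD : HasDerivAt (deriv f) (deriv (deriv f) x) x :=
    (hf'.differentiable (by simp) x).hasDerivAt
  have hslope := hasDerivAt_iff_tendsto_slope.mp hD
  have hmono : 𝓝[>] x ≤ 𝓝[≠] x :=
    nhdsWithin_mono x (fun y hy => by simpa using ne_of_gt hy)
  have hev : ∀ᶠ y in 𝓝[>] x, 0 < slope (deriv f) x y :=
    (hslope.mono_left hmono).eventually (eventually_gt_nhds hpos)
  have hev2 : ∀ᶠ y in 𝓝[>] x, 0 < deriv f y := by
    filter_upwards [hev, self_mem_nhdsWithin] with y hy hby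
    rw [slope_def_field, hd0, sub_zero] at hy
    have hyx : (0:ℝ) < y - x := sub_pos.mpr hby
    have := mul_pos hy hyx
    rwa [div_mul_cancel₀ _ (ne_of_gt hyx)] at this
  have hev3 : ∀ᶠ y in 𝓝[>] x, f y ≤ f x := h.filter_mono nhdsWithin_le_nhds
  obtain ⟨u, hu, hsub⟩ :=
    mem_nhdsGT_iff_exists_Ioc_subset.mp (hev2.and hev3)
  have hsm : StrictMonoOn f (Set.Icc x u) := by
    apply strictMonoOn_of_deriv_pos (convex_Icc x u) hf.continuous.continuousOn
    intro y hy
    rw [interior_Icc] at hy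
    exact (hsub ⟨hy.1, hy.2.le⟩).1
  have hxu : x < u := hu
  have : f x < f u := hsm ⟨le_refl x, hxu.le⟩ ⟨hxu.le, le_refl u⟩ hxu
  exact absurd this (not_lt.mpr (hsub ⟨hxu, le_refl u⟩).2)

lemma second_deriv_nonneg_of_isLocalMin (f : ℝ → ℝ) (hf : ContDiff ℝ (⊤ : ℕ∞) f) {x : ℝ}
    (h : IsLocalMin f x) : 0 ≤ deriv (deriv f) x := by
  have := second_deriv_nonpos_of_isLocalMax (fun y => -f y) hf.neg h.neg
  have h1 : deriv (fun y => -f y) = fun y => -deriv f y := funext fun y => deriv.neg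
  rw [h1] at this
  rw [deriv.fun_neg] at this
  linarith

/-- **Proposition 4.1 (II).** Uniform bounds on the electric potential of the
one-dimensional steady Nernst–Planck–Poisson system, in terms of the boundary
data only: with `λᵢ = min{αᵢe^{−zᵢV}, βᵢ}`, `Λᵢ = max{αᵢe^{−zᵢV}, βᵢ}`,
`min{−V, (1/2)log(λ₁/Λ₂)} ≤ Φ ≤ max{0, (1/2)log(Λ₁/λ₂)}`. -/
theorem potential_bounds
    (L ε V α₁ α₂ β₁ β₂ : ℝ) (hL : 0 < L) (hε : 0 < ε) (hV : 0 < V)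
    (hα₁ : 0 < α₁) (hα₂ : 0 < α₂) (hβ₁ : 0 < β₁) (hβ₂ : 0 < β₂)
    (c₁ c₂ Φ : ℝ → ℝ)
    (hc₁ : ContDiff ℝ (⊤ : ℕ∞) c₁) (hc₂ : ContDiff ℝ (⊤ : ℕ∞) c₂) (hΦ : ContDiff ℝ (⊤ : ℕ∞) Φ)
    (heq₁ : ∀ x ∈ Set.Icc 0 L, deriv (fun y => deriv c₁ y + c₁ y * deriv Φ y) x = 0)
    (heq₂ : ∀ x ∈ Set.Icc 0 L, deriv (fun y => deriv c₂ y - c₂ y * deriv Φ y) x = 0)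
    (hpois : ∀ x ∈ Set.Icc 0 L, -(ε * deriv (deriv Φ) x) = c₁ x - c₂ x)
    (hc₁0 : c₁ 0 = α₁) (hc₂0 : c₂ 0 = α₂) (hc₁L : c₁ L = β₁) (hc₂L : c₂ L = β₂)
    (hΦ0 : Φ 0 = -V) (hΦL : Φ L = 0) :
    ∀ x ∈ Set.Icc 0 L,
      min (-V) ((1 / 2) * Real.log (min (α₁ * Real.exp (-V)) β₁ /
        max (α₂ * Real.exp V) β₂)) ≤ Φ x ∧
      Φ x ≤ max 0 ((1 / 2) * Real.log (max (α₁ * Real.exp (-V)) β₁ /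
        min (α₂ * Real.exp V) β₂)) := by
  -- Slotboom bounds for the two species
  have hb1 := slotboom_bounds_s14 L 1 hL c₁ Φ hc₁ hΦ (by
    intro x hx
    have e : (fun y => deriv c₁ y + 1 * (c₁ y * deriv Φ y))
        = fun y => deriv c₁ y + c₁ y * deriv Φ y := by funext y; ring
    rw [e]; exact heq₁ x hx)
  have hb2 := slotboom_bounds_s14 L (-1) hL c₂ Φ hc₂ hΦ (by
    intro x hx
    have e : (fun y => deriv c₂ y + (-1) * (c₂ y * deriv Φ y))
        = fun y => deriv c₂ y - c₂ y * deriv Φ y := by funext y; ring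
    rw [e]; exact heq₂ x hx)
  simp only [hc₁0, hc₁L, hΦ0, hΦL, one_mul, mul_zero, Real.exp_zero, mul_one] at hb1
  simp only [hc₂0, hc₂L, hΦ0, hΦL, neg_mul, one_mul, neg_neg, neg_zero,
    Real.exp_zero, mul_one] at hb2
  -- abbreviations
  set lam1 := min (α₁ * Real.exp (-V)) β₁ with hlam1
  set Lam1 := max (α₁ * Real.exp (-V)) β₁ with hLam1
  set lam2 := min (α₂ * Real.exp V) β₂ with hlam2
  set Lam2 := max (α₂ * Real.exp V) β₂ with hLam2
  have hlam1pos : 0 < lam1 := lt_min (mul_pos hα₁ (Real.exp_pos _)) hβ₁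
  have hLam1pos : 0 < Lam1 := lt_of_lt_of_le hlam1pos (min_le_max)
  have hlam2pos : 0 < lam2 := lt_min (mul_pos hα₂ (Real.exp_pos _)) hβ₂
  have hLam2pos : 0 < Lam2 := lt_of_lt_of_le hlam2pos (min_le_max)
  have h0mem : (0 : ℝ) ∈ Set.Icc 0 L := Set.left_mem_Icc.mpr hL.le
  -- Upper bound via maximum principle
  obtain ⟨w, hwmem, hwmax⟩ := isCompact_Icc.exists_isMaxOn ⟨0, h0mem⟩
    hΦ.continuous.continuousOn
  have hub : Φ w ≤ max 0 ((1 / 2) * Real.log (Lam1 / lam2)) := by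
    rcases le_or_gt (Φ w) 0 with h0 | h0
    · exact le_trans h0 (le_max_left _ _)
    · have hw0 : w ≠ 0 := by intro he; rw [he, hΦ0] at h0; linarith
      have hwL : w ≠ L := by intro he; rw [he, hΦL] at h0; linarith
      have hwI : w ∈ Set.Ioo 0 L :=
        ⟨lt_of_le_of_ne hwmem.1 (Ne.symm hw0), lt_of_le_of_ne hwmem.2 hwL⟩
      have hloc : IsLocalMax Φ w := hwmax.isLocalMax (Icc_mem_nhds hwI.1 hwI.2)
      have h2 : deriv (deriv Φ) w ≤ 0 := second_deriv_nonpos_of_isLocalMax Φ hΦ hloc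
      have hp := hpois w hwmem
      have hc2le : c₂ w ≤ c₁ w := by nlinarith
      have h1 := (hb1 w hwmem).2
      have h2' := (hb2 w hwmem).1
      have hlam2le : lam2 * Real.exp (Φ w) ≤ c₂ w := by
        have := mul_le_mul_of_nonneg_right h2' (Real.exp_pos (Φ w)).le
        rwa [mul_assoc, ← Real.exp_add, neg_add_cancel, Real.exp_zero, mul_one] at this
      have hkey : lam2 * Real.exp (2 * Φ w) ≤ Lam1 := by
        have h3 : lam2 * Real.exp (Φ w) * Real.exp (Φ w) ≤ c₁ w * Real.exp (Φ w) :=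
          mul_le_mul_of_nonneg_right (hlam2le.trans hc2le) (Real.exp_pos _).le
        calc lam2 * Real.exp (2 * Φ w)
            = lam2 * Real.exp (Φ w) * Real.exp (Φ w) := by
              rw [mul_assoc, ← Real.exp_add]; ring_nf
          _ ≤ Lam1 := h3.trans h1
      have hlog : 2 * Φ w ≤ Real.log (Lam1 / lam2) := by
        rw [Real.le_log_iff_exp_le (div_pos hLam1pos hlam2pos)]
        rw [le_div_iff₀ hlam2pos]
        linarith [hkey]
      have : Φ w ≤ (1 / 2) * Real.log (Lam1 / lam2) := by linarith
      exact this.trans (le_max_right _ _)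
  -- Lower bound via minimum principle
  obtain ⟨v, hvmem, hvmin⟩ := isCompact_Icc.exists_isMinOn ⟨0, h0mem⟩
    hΦ.continuous.continuousOn
  have hlb : min (-V) ((1 / 2) * Real.log (lam1 / Lam2)) ≤ Φ v := by
    rcases le_or_gt (-V) (Φ v) with h0 | h0
    · exact le_trans (min_le_left _ _) h0
    · have hv0 : v ≠ 0 := by intro he; rw [he, hΦ0] at h0; linarith
      have hvL : v ≠ L := by intro he; rw [he, hΦL] at h0; linarith
      have hvI : v ∈ Set.Ioo 0 L :=
        ⟨lt_of_le_of_ne hvmem.1 (Ne.symm hv0), lt_of_le_of_ne hvmem.2 hvL⟩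
      have hloc : IsLocalMin Φ v := hvmin.isLocalMin (Icc_mem_nhds hvI.1 hvI.2)
      have h2 : 0 ≤ deriv (deriv Φ) v := second_deriv_nonneg_of_isLocalMin Φ hΦ hloc
      have hp := hpois v hvmem
      have hc1le : c₁ v ≤ c₂ v := by nlinarith
      have h1 := (hb1 v hvmem).1
      have h2' := (hb2 v hvmem).2
      have hLam2ge : c₂ v ≤ Lam2 * Real.exp (Φ v) := by
        have := mul_le_mul_of_nonneg_right h2' (Real.exp_pos (Φ v)).le
        rwa [mul_assoc, ← Real.exp_add, neg_add_cancel, Real.exp_zero, mul_one] at this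
      have hkey : lam1 ≤ Lam2 * Real.exp (2 * Φ v) := by
        have h3 : c₂ v * Real.exp (Φ v) ≤ Lam2 * Real.exp (Φ v) * Real.exp (Φ v) :=
          mul_le_mul_of_nonneg_right hLam2ge (Real.exp_pos _).le
        have h4 : c₁ v * Real.exp (Φ v) ≤ c₂ v * Real.exp (Φ v) :=
          mul_le_mul_of_nonneg_right hc1le (Real.exp_pos _).le
        calc lam1 ≤ c₁ v * Real.exp (Φ v) := h1
          _ ≤ Lam2 * Real.exp (Φ v) * Real.exp (Φ v) := h4.trans h3
          _ = Lam2 * Real.exp (2 * Φ v) := by rw [mul_assoc, ← Real.exp_add]; ring_nf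
      have hlog : Real.log (lam1 / Lam2) ≤ 2 * Φ v := by
        rw [Real.log_le_iff_le_exp (div_pos hlam1pos hLam2pos)]
        rw [div_le_iff₀ hLam2pos]
        linarith [hkey]
      have : (1 / 2) * Real.log (lam1 / Lam2) ≤ Φ v := by linarith
      exact le_trans (min_le_right _ _) this
  intro x hx
  exact ⟨le_trans hlb (hvmin hx), le_trans (hwmax hx) hub⟩
end
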